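/- arXiv:2504.07409 — 6 statements merged into one kernel-verified Lean document; each statement's English description precedes it below -/
import Mathlib

section
/- Let μ > 0 be a real number and T a set of real numbers with μ ∈ T and −μ ∈ T. Let a and b be real numbers that are integer multiples of μ with a + b ≠ 0. Then every faithful rounding t of a + b with respect to T satisfies (a + b)·t > 0; in particular t ≠ 0 and t has the same sign as a + b. (Paper's Lemma 12: faithfully rounded floating-point addition of representable operands preserves the sign of the exact sum.) -/
/-- Paper's Lemma 12: a faithful rounding of the nonzero sum of two representable
operands preserves the sign of the exact sum. -/
theorem faithful_rounding_add_sign_preserving (T : Set ℝ) (μ a b t : ℝ)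
    (hμ : 0 < μ) (hμT : μ ∈ T) (hμT' : -μ ∈ T)
    (c₁ c₂ : ℤ) (ha : a = (c₁ : ℝ) * μ) (hb : b = (c₂ : ℝ) * μ)
    (hab : a + b ≠ 0)
    (ht : IsGreatest {x | x ∈ T ∧ x ≤ a + b} t ∨ IsLeast {x | x ∈ T ∧ a + b ≤ x} t) :
    (a + b) * t > 0 := by
  have hsum : a + b = ((c₁ + c₂ : ℤ) : ℝ) * μ := by push_cast; rw [ha, hb]; ring
  have hc : (c₁ + c₂ : ℤ) ≠ 0 := by
    intro h
    apply hab
    rw [hsum, h]; simp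
  rcases lt_or_gt_of_ne hc with h | h
  · -- c₁+c₂ ≤ -1, so a+b ≤ -μ < 0
    have h1 : ((c₁ + c₂ : ℤ) : ℝ) ≤ -1 := by exact_mod_cast Int.le_sub_one_of_lt h
    have hle : a + b ≤ -μ := by
      rw [hsum]
      nlinarith
    have hneg : a + b < 0 := lt_of_le_of_lt hle (by linarith)
    rcases ht with ⟨⟨_, htle⟩, _⟩ | ⟨_, hlb⟩
    · have : t < 0 := lt_of_le_of_lt htle hneg
      exact mul_pos_of_neg_of_neg hneg this
    · have : t ≤ -μ := hlb ⟨hμT', hle⟩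
      have : t < 0 := lt_of_le_of_lt this (by linarith)
      exact mul_pos_of_neg_of_neg hneg this
  · -- c₁+c₂ ≥ 1, so a+b ≥ μ > 0
    have h1 : (1 : ℝ) ≤ ((c₁ + c₂ : ℤ) : ℝ) := by exact_mod_cast h
    have hle : μ ≤ a + b := by
      rw [hsum]; nlinarith
    have hpos : 0 < a + b := lt_of_lt_of_le hμ hle
    rcases ht with ⟨_, hub⟩ | ⟨⟨_, hge⟩, _⟩
    · have : μ ≤ t := hub ⟨hμT, hle⟩
      exact mul_pos hpos (lt_of_lt_of_le hμ this)
    · exact mul_pos hpos (lt_of_lt_of_le hpos hge)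
end

section
/- Let μ > 0 be a real number and T a set of real numbers with 0 ∈ T, μ ∈ T, and −μ ∈ T. Let a, b, s be real numbers that are integer multiples of μ, set e = a + b − s, and let t be a faithful rounding of e with respect to T. Then t ≠ 0 if and only if e ≠ 0. (Paper's Theorem 2: a faithful rounding t of the floating-point addition error a + b − (a ⊕_rnd b) is neither +0 nor −0 if and only if the error is nonzero.) -/
/-- Paper's Theorem 2: a faithful rounding `t` of the floating-point addition error
`e = a + b − s` is nonzero if and only if the error is nonzero. -/
theorem faithful_rounding_add_error_nonzero_iff (T : Set ℝ) (μ a b s e t : ℝ)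
    (hμ : 0 < μ) (h0 : (0 : ℝ) ∈ T) (hμT : μ ∈ T) (hμT' : -μ ∈ T)
    (c₁ c₂ c₃ : ℤ) (ha : a = (c₁ : ℝ) * μ) (hb : b = (c₂ : ℝ) * μ)
    (hs : s = (c₃ : ℝ) * μ)
    (he : e = a + b - s)
    (ht : IsGreatest {x | x ∈ T ∧ x ≤ e} t ∨ IsLeast {x | x ∈ T ∧ e ≤ x} t) :
    t ≠ 0 ↔ e ≠ 0 := by
  have hemul : e = ((c₁ + c₂ - c₃ : ℤ) : ℝ) * μ := by
    push_cast
    rw [he, ha, hb, hs]; ring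
  set k : ℤ := c₁ + c₂ - c₃ with hk
  constructor
  · intro htne hez
    -- e = 0, show t = 0
    apply htne
    rcases ht with ⟨⟨_, hle⟩, hub⟩ | ⟨⟨_, hge⟩, hlb⟩
    · exact le_antisymm (hez ▸ hle) (hub ⟨h0, by rw [hez]⟩)
    · exact le_antisymm (hlb ⟨h0, by rw [hez]⟩) (hez ▸ hge)
  · intro hene htz
    -- e ≠ 0, so k ≠ 0, so |e| ≥ μ
    have hkne : k ≠ 0 := by
      intro h; apply hene; rw [hemul, h]; simp
    rcases lt_or_gt_of_ne hkne with hneg | hpos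
    · -- k ≤ -1, e ≤ -μ
      have : (k : ℝ) ≤ -1 := by exact_mod_cast Int.le_sub_one_of_lt hneg
      have heμ : e ≤ -μ := by
        rw [hemul]; nlinarith
      rcases ht with ⟨⟨_, hle⟩, _⟩ | ⟨_, hlb⟩
      · linarith [htz ▸ hle]
      · have := hlb ⟨hμT', le_trans heμ (le_refl _)⟩
        linarith [htz ▸ this]
    · -- k ≥ 1, e ≥ μ
      have : (1 : ℝ) ≤ (k : ℝ) := by exact_mod_cast hpos
      have heμ : μ ≤ e := by
        rw [hemul]; nlinarith
      rcases ht with ⟨_, hub⟩ | ⟨⟨_, hge⟩, _⟩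
      · have := hub ⟨hμT, heμ⟩
        linarith [htz ▸ this]
      · linarith [htz ▸ hge]
end

section
/- Let T be a set of real numbers with 0 ∈ T, let a and b be real numbers, and let m be a faithful rounding of a·b with respect to T. If a·b − m ≠ 0, then m and a·b − m have different signs (i.e., m·((a·b) − m) < 0) if and only if |a·b| < |m|. (Paper's Theorem 3: for non-NaN, non-infinity floats a, b whose rounded product does not overflow, the rounded product a ⊗_rnd b and the rounding error a·b − (a ⊗_rnd b), when nonzero, have different signs exactly when |a·b| < |a ⊗_rnd b|.) -/
/-- Paper's Theorem 3: the rounded product and the nonzero rounding error have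
different signs exactly when `|a·b| < |m|`. -/
theorem rz_mul_sign_iff (T : Set ℝ) (a b m : ℝ) (h0 : (0 : ℝ) ∈ T)
    (hm : IsGreatest {t | t ∈ T ∧ t ≤ a * b} m ∨ IsLeast {t | t ∈ T ∧ a * b ≤ t} m)
    (herr : a * b - m ≠ 0) :
    m * ((a * b) - m) < 0 ↔ |a * b| < |m| := by
  rcases hm with ⟨⟨hmT, hml⟩, hub⟩ | ⟨⟨hmT, hml⟩, hlb⟩
  · have he : 0 < a * b - m := lt_of_le_of_ne (by linarith) (Ne.symm herr)
    rcases le_or_gt 0 (a * b) with hr | hr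
    · have hm0 : 0 ≤ m := hub ⟨h0, hr⟩
      constructor
      · intro h; nlinarith
      · intro h
        rw [abs_of_nonneg hr, abs_of_nonneg hm0] at h; linarith
    · have hm0 : m < 0 := by linarith
      constructor
      · intro _
        rw [abs_of_neg hr, abs_of_neg hm0]; linarith
      · intro _; nlinarith
  · have he : a * b - m < 0 := lt_of_le_of_ne (by linarith) herr
    rcases le_or_gt (a * b) 0 with hr | hr
    · have hm0 : m ≤ 0 := hlb ⟨h0, hr⟩
      constructor
      · intro h; nlinarith
      · intro h
        rw [abs_of_nonpos hr, abs_of_nonpos hm0] at h; linarith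
    · have hm0 : 0 < m := by linarith
      constructor
      · intro _
        rw [abs_of_pos hr, abs_of_pos hm0]; linarith
      · intro _; nlinarith
end

section
/- Let T be a set of real numbers, and let p₁, p₂, l₁, u₁, l₂, u₂ be real numbers with l₁ ≤ p₁ ≤ u₁ and l₂ ≤ p₂ ≤ u₂. Suppose U is the least element of {t ∈ T | u₁ + u₂ ≤ t}. Then every faithful rounding s of p₁ + p₂ with respect to T satisfies s ≤ U. (Addition case of the paper's Theorem 6: the upper bound of a floating-point sum over all rounding modes and all operand values in the given intervals is RU(upper₁ + upper₂).) -/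
/-- Addition case of the paper's Theorem 6: the upper bound of a floating-point
sum over all rounding modes and operand values in the intervals is `RU(u₁ + u₂)`. -/
theorem fp_add_interval_upper_bound (T : Set ℝ) (p₁ p₂ l₁ u₁ l₂ u₂ U s : ℝ)
    (hp₁ : l₁ ≤ p₁ ∧ p₁ ≤ u₁) (hp₂ : l₂ ≤ p₂ ∧ p₂ ≤ u₂)
    (hU : IsLeast {t | t ∈ T ∧ u₁ + u₂ ≤ t} U)
    (hs : IsGreatest {t | t ∈ T ∧ t ≤ p₁ + p₂} s ∨ IsLeast {t | t ∈ T ∧ p₁ + p₂ ≤ t} s) :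
    s ≤ U := by
  have hpu : p₁ + p₂ ≤ u₁ + u₂ := add_le_add hp₁.2 hp₂.2
  rcases hs with h | h
  · exact h.1.2.trans (hpu.trans hU.1.2)
  · exact h.2 ⟨hU.1.1, hpu.trans hU.1.2⟩
end

section
/- Let T be a set of real numbers, and let p₁, p₂, l₁, u₁, l₂, u₂ be real numbers with l₁ ≤ p₁ ≤ u₁ and l₂ ≤ p₂ ≤ u₂. Suppose d₁ is the greatest element of {t ∈ T | t ≤ l₁·l₂}, d₂ is the greatest element of {t ∈ T | t ≤ l₁·u₂}, d₃ is the greatest element of {t ∈ T | t ≤ u₁·l₂}, and d₄ is the greatest element of {t ∈ T | t ≤ u₁·u₂}. Then every faithful rounding s of p₁·p₂ with respect to T satisfies min(d₁, d₂, d₃, d₄) ≤ s. (Multiplication case of the paper's Theorem 5: the lower bound of a floating-point product over all rounding modes and all operand values in the given intervals is the minimum of the four round-down corner products.) -/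
lemma corner_min_le (p₁ p₂ l₁ u₁ l₂ u₂ : ℝ) (h1 : l₁ ≤ p₁) (h2 : p₁ ≤ u₁)
    (h3 : l₂ ≤ p₂) (h4 : p₂ ≤ u₂) :
    min (min (l₁*l₂) (l₁*u₂)) (min (u₁*l₂) (u₁*u₂)) ≤ p₁ * p₂ := by
  have step : ∀ a : ℝ, min (a*l₂) (a*u₂) ≤ a * p₂ := by
    intro a
    rcases le_total 0 a with ha | ha
    · exact le_trans (min_le_left _ _) (by nlinarith)
    · exact le_trans (min_le_right _ _) (by nlinarith)
  rcases le_total 0 p₂ with hp | hp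
  · calc min (min (l₁*l₂) (l₁*u₂)) (min (u₁*l₂) (u₁*u₂)) ≤ min (l₁*l₂) (l₁*u₂) :=
        min_le_left _ _
      _ ≤ l₁ * p₂ := step l₁
      _ ≤ p₁ * p₂ := by nlinarith
  · calc min (min (l₁*l₂) (l₁*u₂)) (min (u₁*l₂) (u₁*u₂)) ≤ min (u₁*l₂) (u₁*u₂) :=
        min_le_right _ _
      _ ≤ u₁ * p₂ := step u₁
      _ ≤ p₁ * p₂ := by nlinarith

/-- Multiplication case of the paper's Theorem 5: the lower bound of a
floating-point product over all rounding modes and operand values is the minimum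
of the four round-down corner products. -/
theorem fp_mul_interval_lower_bound (T : Set ℝ) (p₁ p₂ l₁ u₁ l₂ u₂ d₁ d₂ d₃ d₄ s : ℝ)
    (hp₁ : l₁ ≤ p₁ ∧ p₁ ≤ u₁) (hp₂ : l₂ ≤ p₂ ∧ p₂ ≤ u₂)
    (hd₁ : IsGreatest {t | t ∈ T ∧ t ≤ l₁ * l₂} d₁)
    (hd₂ : IsGreatest {t | t ∈ T ∧ t ≤ l₁ * u₂} d₂)
    (hd₃ : IsGreatest {t | t ∈ T ∧ t ≤ u₁ * l₂} d₃)
    (hd₄ : IsGreatest {t | t ∈ T ∧ t ≤ u₁ * u₂} d₄)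
    (hs : IsGreatest {t | t ∈ T ∧ t ≤ p₁ * p₂} s ∨ IsLeast {t | t ∈ T ∧ p₁ * p₂ ≤ t} s) :
    min (min d₁ d₂) (min d₃ d₄) ≤ s := by
  have hc := corner_min_le p₁ p₂ l₁ u₁ l₂ u₂ hp₁.1 hp₁.2 hp₂.1 hp₂.2
  -- pick the corner achieving the min
  have key : ∃ d c, d ∈ T ∧ d ≤ c ∧ c ≤ p₁ * p₂ ∧ min (min d₁ d₂) (min d₃ d₄) ≤ d := by
    rcases le_total (min (l₁*l₂) (l₁*u₂)) (min (u₁*l₂) (u₁*u₂)) with h | h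
    · rcases le_total (l₁*l₂) (l₁*u₂) with h' | h'
      · exact ⟨d₁, l₁*l₂, hd₁.1.1, hd₁.1.2, by rw [min_eq_left h, min_eq_left h'] at hc; exact hc,
          le_trans (min_le_left _ _) (min_le_left _ _)⟩
      · exact ⟨d₂, l₁*u₂, hd₂.1.1, hd₂.1.2, by rw [min_eq_left h, min_eq_right h'] at hc; exact hc,
          le_trans (min_le_left _ _) (min_le_right _ _)⟩
    · rcases le_total (u₁*l₂) (u₁*u₂) with h' | h'
      · exact ⟨d₃, u₁*l₂, hd₃.1.1, hd₃.1.2, by rw [min_eq_right h, min_eq_left h'] at hc; exact hc,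
          le_trans (min_le_right _ _) (min_le_left _ _)⟩
      · exact ⟨d₄, u₁*u₂, hd₄.1.1, hd₄.1.2, by rw [min_eq_right h, min_eq_right h'] at hc; exact hc,
          le_trans (min_le_right _ _) (min_le_right _ _)⟩
  obtain ⟨d, c, hdT, hdc, hcp, hmd⟩ := key
  rcases hs with hs | hs
  · exact hmd.trans (hs.2 ⟨hdT, hdc.trans hcp⟩)
  · exact hmd.trans (hdc.trans (hcp.trans hs.1.2))
end

section
/- Let T be a set of real numbers, and let p₁, p₂, l₁, u₁, l₂, u₂ be real numbers with l₁ ≤ p₁ ≤ u₁ and l₂ ≤ p₂ ≤ u₂. Suppose e₁ is the least element of {t ∈ T | l₁·l₂ ≤ t}, e₂ is the least element of {t ∈ T | l₁·u₂ ≤ t}, e₃ is the least element of {t ∈ T | u₁·l₂ ≤ t}, and e₄ is the least element of {t ∈ T | u₁·u₂ ≤ t}. Then every faithful rounding s of p₁·p₂ with respect to T satisfies s ≤ max(e₁, e₂, e₃, e₄). (Multiplication case of the paper's Theorem 6: the upper bound of a floating-point product over all rounding modes and all operand values in the given intervals is the maximum of the four round-up corner products.) -/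
/-- A product with one factor constrained to an interval is bounded by the max of
the endpoint products. -/
lemma mul_le_max_endpoints {l p u c : ℝ} (hl : l ≤ p) (hu : p ≤ u) :
    p * c ≤ max (l * c) (u * c) := by
  rcases le_total 0 c with hc | hc
  · exact le_max_of_le_right (mul_le_mul_of_nonneg_right hu hc)
  · exact le_max_of_le_left (mul_le_mul_of_nonpos_right hl hc)

/-- Multiplication case of the paper's Theorem 6: the upper bound of a
floating-point product over all rounding modes and operand values is the maximum
of the four round-up corner products. -/
theorem fp_mul_interval_upper_bound (T : Set ℝ) (p₁ p₂ l₁ u₁ l₂ u₂ e₁ e₂ e₃ e₄ s : ℝ)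
    (hp₁ : l₁ ≤ p₁ ∧ p₁ ≤ u₁) (hp₂ : l₂ ≤ p₂ ∧ p₂ ≤ u₂)
    (he₁ : IsLeast {t | t ∈ T ∧ l₁ * l₂ ≤ t} e₁)
    (he₂ : IsLeast {t | t ∈ T ∧ l₁ * u₂ ≤ t} e₂)
    (he₃ : IsLeast {t | t ∈ T ∧ u₁ * l₂ ≤ t} e₃)
    (he₄ : IsLeast {t | t ∈ T ∧ u₁ * u₂ ≤ t} e₄)
    (hs : IsGreatest {t | t ∈ T ∧ t ≤ p₁ * p₂} s ∨ IsLeast {t | t ∈ T ∧ p₁ * p₂ ≤ t} s) :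
    s ≤ max (max e₁ e₂) (max e₃ e₄) := by
  -- p₁ * p₂ is bounded by the max of the four corner products
  have hcorner : p₁ * p₂ ≤ max (max (l₁ * l₂) (l₁ * u₂)) (max (u₁ * l₂) (u₁ * u₂)) := by
    have h1 := mul_le_max_endpoints hp₁.1 hp₁.2 (c := p₂)
    have h2 := mul_le_max_endpoints hp₂.1 hp₂.2 (c := l₁)
    have h3 := mul_le_max_endpoints hp₂.1 hp₂.2 (c := u₁)
    rw [mul_comm l₂ l₁, mul_comm u₂ l₁] at h2
    rw [mul_comm l₂ u₁, mul_comm u₂ u₁] at h3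
    calc p₁ * p₂ ≤ max (p₂ * l₁) (p₂ * u₁) := by rw [mul_comm p₂ l₁, mul_comm p₂ u₁]; exact h1
    _ ≤ max (max (l₁ * l₂) (l₁ * u₂)) (max (u₁ * l₂) (u₁ * u₂)) := max_le_max h2 h3
  rcases hs with hs | hs
  · -- round-down: s ≤ p₁p₂ ≤ max corners ≤ max eᵢ
    have : max (max (l₁ * l₂) (l₁ * u₂)) (max (u₁ * l₂) (u₁ * u₂))
        ≤ max (max e₁ e₂) (max e₃ e₄) :=
      max_le_max (max_le_max he₁.1.2 he₂.1.2) (max_le_max he₃.1.2 he₄.1.2)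
    exact hs.1.2.trans (hcorner.trans this)
  · -- round-up: p₁p₂ ≤ some corner ≤ eᵢ ∈ T, so s ≤ eᵢ
    rcases le_max_iff.mp hcorner with h | h <;> rcases le_max_iff.mp h with h' | h'
    · exact le_max_of_le_left (le_max_of_le_left (hs.2 ⟨he₁.1.1, h'.trans he₁.1.2⟩))
    · exact le_max_of_le_left (le_max_of_le_right (hs.2 ⟨he₂.1.1, h'.trans he₂.1.2⟩))
    · exact le_max_of_le_right (le_max_of_le_left (hs.2 ⟨he₃.1.1, h'.trans he₃.1.2⟩))
    · exact le_max_of_le_right (le_max_of_le_right (hs.2 ⟨he₄.1.1, h'.trans he₄.1.2⟩))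
end
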